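/- arXiv:2011.12600 — 7 statements merged into one kernel-verified Lean document; each statement's English description precedes it below -/
import Mathlib

section
/- In a Cartesian difference category, for any map f : A → B, ∂[f] ∘ ⟨x, ε(y)⟩ = ε(∂[f]) ∘ ⟨x, y⟩; that is, applying the difference combinator to an infinitesimal perturbation equals the infinitesimal extension of the difference. -/
universe u v

/-- The underlying Cartesian left additive category of a Cartesian difference category: a category with chosen binary products
whose hom-sets are commutative monoids, where precomposition preserves the
additive structure and the projections are additive. -/
structure CDC where
  Obj : Type u
  Hom : Obj → Obj → Type v
  id : ∀ (A : Obj), Hom A A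
  comp : ∀ {A B C : Obj}, Hom B C → Hom A B → Hom A C
  comp_id : ∀ {A B : Obj} (f : Hom A B), comp f (id A) = f
  id_comp : ∀ {A B : Obj} (f : Hom A B), comp (id B) f = f
  comp_assoc : ∀ {A B C D : Obj} (h : Hom C D) (g : Hom B C) (f : Hom A B),
      comp (comp h g) f = comp h (comp g f)
  prod : Obj → Obj → Obj
  p0 : ∀ {A B : Obj}, Hom (prod A B) A
  p1 : ∀ {A B : Obj}, Hom (prod A B) B
  pair : ∀ {C A B : Obj}, Hom C A → Hom C B → Hom C (prod A B)
  pair_p0 : ∀ {C A B : Obj} (f : Hom C A) (g : Hom C B), comp p0 (pair f g) = f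
  pair_p1 : ∀ {C A B : Obj} (f : Hom C A) (g : Hom C B), comp p1 (pair f g) = g
  pair_unique : ∀ {C A B : Obj} (h : Hom C (prod A B)),
      pair (comp p0 h) (comp p1 h) = h
  add : ∀ {A B : Obj}, Hom A B → Hom A B → Hom A B
  zero : ∀ {A B : Obj}, Hom A B
  add_assoc : ∀ {A B : Obj} (f g h : Hom A B), add (add f g) h = add f (add g h)
  add_comm : ∀ {A B : Obj} (f g : Hom A B), add f g = add g f
  add_zero : ∀ {A B : Obj} (f : Hom A B), add f zero = f
  add_comp : ∀ {A B C : Obj} (f g : Hom B C) (h : Hom A B),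
      comp (add f g) h = add (comp f h) (comp g h)
  zero_comp : ∀ {A B C : Obj} (h : Hom A B), comp (zero : Hom B C) h = (zero : Hom A C)
  p0_add : ∀ {A B C : Obj} (f g : Hom C (prod A B)),
      comp p0 (add f g) = add (comp p0 f) (comp p0 g)
  p0_zero : ∀ {A B C : Obj},
      comp (p0 : Hom (prod A B) A) (zero : Hom C (prod A B)) = zero
  p1_add : ∀ {A B C : Obj} (f g : Hom C (prod A B)),
      comp p1 (add f g) = add (comp p1 f) (comp p1 g)
  p1_zero : ∀ {A B C : Obj},
      comp (p1 : Hom (prod A B) B) (zero : Hom C (prod A B)) = zero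
  eps : ∀ {A B : Obj}, Hom A B → Hom A B
  eps_add : ∀ {A B : Obj} (f g : Hom A B), eps (add f g) = add (eps f) (eps g)
  eps_zero : ∀ {A B : Obj}, eps (zero : Hom A B) = zero
  eps_comp : ∀ {A B C : Obj} (g : Hom B C) (f : Hom A B),
      eps (comp g f) = comp (eps g) f
  eps_p0 : ∀ {A B : Obj},
      eps (p0 : Hom (prod A B) A) = comp p0 (eps (id (prod A B)))
  eps_p1 : ∀ {A B : Obj},
      eps (p1 : Hom (prod A B) B) = comp p1 (eps (id (prod A B)))
  d : ∀ {A B : Obj}, Hom A B → Hom (prod A A) B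
  cd0 : ∀ {C A B : Obj} (f : Hom A B) (x y : Hom C A),
      comp f (add x (eps y)) = add (comp f x) (eps (comp (d f) (pair x y)))
  cd1_add : ∀ {A B : Obj} (f g : Hom A B), d (add f g) = add (d f) (d g)
  cd1_zero : ∀ {A B : Obj}, d (zero : Hom A B) = zero
  cd1_eps : ∀ {A B : Obj} (f : Hom A B), d (eps f) = eps (d f)
  cd2 : ∀ {C A B : Obj} (f : Hom A B) (x y z : Hom C A),
      comp (d f) (pair x (add y z))
        = add (comp (d f) (pair x y)) (comp (d f) (pair (add x (eps y)) z))
  cd2_zero : ∀ {C A B : Obj} (f : Hom A B) (x : Hom C A),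
      comp (d f) (pair x zero) = zero
  cd3_id : ∀ {A : Obj}, d (id A) = p1
  cd3_p0 : ∀ {A B : Obj}, d (p0 : Hom (prod A B) A) = comp p0 p1
  cd3_p1 : ∀ {A B : Obj}, d (p1 : Hom (prod A B) B) = comp p1 p1
  cd4 : ∀ {C A B : Obj} (f : Hom C A) (g : Hom C B),
      d (pair f g) = pair (d f) (d g)
  cd5 : ∀ {A B C : Obj} (g : Hom B C) (f : Hom A B),
      d (comp g f) = comp (d g) (pair (comp f p0) (d f))
  cd6 : ∀ {C A B : Obj} (f : Hom A B) (x y z : Hom C A),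
      comp (d (d f)) (pair (pair x y) (pair zero z))
        = comp (d f) (pair (add x (eps y)) z)
  cd7 : ∀ {C A B : Obj} (f : Hom A B) (x y z : Hom C A),
      comp (d (d f)) (pair (pair x y) (pair z zero))
        = comp (d (d f)) (pair (pair x z) (pair y zero))

/-- In a Cartesian difference category, for any map `f : A → B`,
`∂[f] ∘ ⟨x, ε(y)⟩ = ε(∂[f]) ∘ ⟨x, y⟩`. -/
theorem d_of_eps_perturbation (X : CDC) {C A B : X.Obj}
    (f : X.Hom A B) (x y : X.Hom C A) :
    X.comp (X.d f) (X.pair x (X.eps y))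
      = X.comp (X.eps (X.d f)) (X.pair x y) := by
  -- ε of any map h equals ε(id) ∘ h
  have eps_as_comp : ∀ {P Q : X.Obj} (h : X.Hom P Q), X.eps h = X.comp (X.eps (X.id Q)) h := by
    intro P Q h
    conv_lhs => rw [← X.id_comp h, X.eps_comp]
  have p0_eps : ∀ {P A' B' : X.Obj} (h : X.Hom P (X.prod A' B')),
      X.comp X.p0 (X.eps h) = X.eps (X.comp X.p0 h) := by
    intro P A' B' h
    rw [eps_as_comp h, ← X.comp_assoc, ← X.eps_p0, X.eps_comp]
  have p1_eps : ∀ {P A' B' : X.Obj} (h : X.Hom P (X.prod A' B')),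
      X.comp X.p1 (X.eps h) = X.eps (X.comp X.p1 h) := by
    intro P A' B' h
    rw [eps_as_comp h, ← X.comp_assoc, ← X.eps_p1, X.eps_comp]
  -- key: ⟨x, ε y⟩ = ⟨x, 0⟩ + ε⟨0, y⟩
  have key : X.pair x (X.eps y) = X.add (X.pair x X.zero) (X.eps (X.pair X.zero y)) := by
    rw [← X.pair_unique (X.add (X.pair x X.zero) (X.eps (X.pair X.zero y)))]
    rw [X.p0_add, X.p1_add, X.pair_p0, X.pair_p1, p0_eps, p1_eps,
        X.pair_p0, X.pair_p1, X.eps_zero, X.add_zero, X.add_comm X.zero, X.add_zero]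
  calc X.comp (X.d f) (X.pair x (X.eps y))
      = X.comp (X.d f) (X.add (X.pair x X.zero) (X.eps (X.pair X.zero y))) := by rw [key]
    _ = X.add (X.comp (X.d f) (X.pair x X.zero))
          (X.eps (X.comp (X.d (X.d f)) (X.pair (X.pair x X.zero) (X.pair X.zero y)))) :=
        X.cd0 (X.d f) (X.pair x X.zero) (X.pair X.zero y)
    _ = X.eps (X.comp (X.d f) (X.pair (X.add x (X.eps X.zero)) y)) := by
        rw [X.cd2_zero, X.add_comm, X.add_zero, X.cd6]
    _ = X.comp (X.eps (X.d f)) (X.pair x y) := by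
        rw [X.eps_zero, X.add_zero, X.eps_comp]
end

section
/- In a Cartesian difference category, in the presence of axioms [C∂.0]–[C∂.5], the pair of axioms [C∂.6] (∂[∂[f]]∘⟨⟨x,y⟩,⟨0,z⟩⟩ = ∂[f]∘⟨x+ε(y),z⟩) and [C∂.7] (∂[∂[f]]∘⟨⟨x,y⟩,⟨z,0⟩⟩ = ∂[∂[f]]∘⟨⟨x,z⟩,⟨y,0⟩⟩) is equivalent to the pair [C∂.6.a] (∂[∂[f]]∘⟨⟨x,0⟩,⟨0,y⟩⟩ = ∂[f]∘⟨x,y⟩) and [C∂.7.a] (∂[∂[f]]∘⟨⟨x,y⟩,⟨z,w⟩⟩ = ∂[∂[f]]∘⟨⟨x,z⟩,⟨y,w⟩⟩). -/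
universe u v

/-- A Cartesian left additive category: a category with chosen binary products
whose hom-sets are commutative monoids, where precomposition preserves the
additive structure and the projections are additive. -/
structure CDC5 where
  Obj : Type u
  Hom : Obj → Obj → Type v
  id : ∀ (A : Obj), Hom A A
  comp : ∀ {A B C : Obj}, Hom B C → Hom A B → Hom A C
  comp_id : ∀ {A B : Obj} (f : Hom A B), comp f (id A) = f
  id_comp : ∀ {A B : Obj} (f : Hom A B), comp (id B) f = f
  comp_assoc : ∀ {A B C D : Obj} (h : Hom C D) (g : Hom B C) (f : Hom A B),
      comp (comp h g) f = comp h (comp g f)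
  prod : Obj → Obj → Obj
  p0 : ∀ {A B : Obj}, Hom (prod A B) A
  p1 : ∀ {A B : Obj}, Hom (prod A B) B
  pair : ∀ {C A B : Obj}, Hom C A → Hom C B → Hom C (prod A B)
  pair_p0 : ∀ {C A B : Obj} (f : Hom C A) (g : Hom C B), comp p0 (pair f g) = f
  pair_p1 : ∀ {C A B : Obj} (f : Hom C A) (g : Hom C B), comp p1 (pair f g) = g
  pair_unique : ∀ {C A B : Obj} (h : Hom C (prod A B)),
      pair (comp p0 h) (comp p1 h) = h
  add : ∀ {A B : Obj}, Hom A B → Hom A B → Hom A B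
  zero : ∀ {A B : Obj}, Hom A B
  add_assoc : ∀ {A B : Obj} (f g h : Hom A B), add (add f g) h = add f (add g h)
  add_comm : ∀ {A B : Obj} (f g : Hom A B), add f g = add g f
  add_zero : ∀ {A B : Obj} (f : Hom A B), add f zero = f
  add_comp : ∀ {A B C : Obj} (f g : Hom B C) (h : Hom A B),
      comp (add f g) h = add (comp f h) (comp g h)
  zero_comp : ∀ {A B C : Obj} (h : Hom A B), comp (zero : Hom B C) h = (zero : Hom A C)
  p0_add : ∀ {A B C : Obj} (f g : Hom C (prod A B)),
      comp p0 (add f g) = add (comp p0 f) (comp p0 g)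
  p0_zero : ∀ {A B C : Obj},
      comp (p0 : Hom (prod A B) A) (zero : Hom C (prod A B)) = zero
  p1_add : ∀ {A B C : Obj} (f g : Hom C (prod A B)),
      comp p1 (add f g) = add (comp p1 f) (comp p1 g)
  p1_zero : ∀ {A B C : Obj},
      comp (p1 : Hom (prod A B) B) (zero : Hom C (prod A B)) = zero
  eps : ∀ {A B : Obj}, Hom A B → Hom A B
  eps_add : ∀ {A B : Obj} (f g : Hom A B), eps (add f g) = add (eps f) (eps g)
  eps_zero : ∀ {A B : Obj}, eps (zero : Hom A B) = zero
  eps_comp : ∀ {A B C : Obj} (g : Hom B C) (f : Hom A B),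
      eps (comp g f) = comp (eps g) f
  eps_p0 : ∀ {A B : Obj},
      eps (p0 : Hom (prod A B) A) = comp p0 (eps (id (prod A B)))
  eps_p1 : ∀ {A B : Obj},
      eps (p1 : Hom (prod A B) B) = comp p1 (eps (id (prod A B)))
  d : ∀ {A B : Obj}, Hom A B → Hom (prod A A) B
  cd0 : ∀ {C A B : Obj} (f : Hom A B) (x y : Hom C A),
      comp f (add x (eps y)) = add (comp f x) (eps (comp (d f) (pair x y)))
  cd1_add : ∀ {A B : Obj} (f g : Hom A B), d (add f g) = add (d f) (d g)
  cd1_zero : ∀ {A B : Obj}, d (zero : Hom A B) = zero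
  cd1_eps : ∀ {A B : Obj} (f : Hom A B), d (eps f) = eps (d f)
  cd2 : ∀ {C A B : Obj} (f : Hom A B) (x y z : Hom C A),
      comp (d f) (pair x (add y z))
        = add (comp (d f) (pair x y)) (comp (d f) (pair (add x (eps y)) z))
  cd2_zero : ∀ {C A B : Obj} (f : Hom A B) (x : Hom C A),
      comp (d f) (pair x zero) = zero
  cd3_id : ∀ {A : Obj}, d (id A) = p1
  cd3_p0 : ∀ {A B : Obj}, d (p0 : Hom (prod A B) A) = comp p0 p1
  cd3_p1 : ∀ {A B : Obj}, d (p1 : Hom (prod A B) B) = comp p1 p1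
  cd4 : ∀ {C A B : Obj} (f : Hom C A) (g : Hom C B),
      d (pair f g) = pair (d f) (d g)
  cd5 : ∀ {A B C : Obj} (g : Hom B C) (f : Hom A B),
      d (comp g f) = comp (d g) (pair (comp f p0) (d f))


namespace CDC5Aux

variable (X : CDC5)

lemma pair_ext {C A B : X.Obj} {u v : X.Hom C (X.prod A B)}
    (h0 : X.comp X.p0 u = X.comp X.p0 v) (h1 : X.comp X.p1 u = X.comp X.p1 v) :
    u = v := by
  rw [← X.pair_unique u, ← X.pair_unique v, h0, h1]

lemma pair_comp {D C A B : X.Obj} (f : X.Hom C A) (g : X.Hom C B) (h : X.Hom D C) :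
    X.comp (X.pair f g) h = X.pair (X.comp f h) (X.comp g h) := by
  apply pair_ext
  · rw [← X.comp_assoc, X.pair_p0, X.pair_p0]
  · rw [← X.comp_assoc, X.pair_p1, X.pair_p1]

lemma pair_add {C A B : X.Obj} (a b : X.Hom C A) (c e : X.Hom C B) :
    X.pair (X.add a b) (X.add c e) = X.add (X.pair a c) (X.pair b e) := by
  apply pair_ext
  · rw [X.pair_p0, X.p0_add, X.pair_p0, X.pair_p0]
  · rw [X.pair_p1, X.p1_add, X.pair_p1, X.pair_p1]

lemma pair_zero {C A B : X.Obj} :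
    X.pair (X.zero : X.Hom C A) (X.zero : X.Hom C B) = X.zero := by
  apply pair_ext
  · rw [X.pair_p0, X.p0_zero]
  · rw [X.pair_p1, X.p1_zero]

lemma eps_id_pair {A B : X.Obj} :
    X.eps (X.id (X.prod A B)) = X.pair (X.eps X.p0) (X.eps X.p1) := by
  rw [X.eps_p0, X.eps_p1, X.pair_unique]

lemma eps_pair {C A B : X.Obj} (f : X.Hom C A) (g : X.Hom C B) :
    X.eps (X.pair f g) = X.pair (X.eps f) (X.eps g) := by
  have h : X.pair f g = X.comp (X.id _) (X.pair f g) := (X.id_comp _).symm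
  rw [h, X.eps_comp, eps_id_pair, pair_comp, ← X.eps_comp, ← X.eps_comp,
    X.pair_p0, X.pair_p1]

lemma zero_add {A B : X.Obj} (f : X.Hom A B) : X.add X.zero f = f := by
  rw [X.add_comm, X.add_zero]

end CDC5Aux

open CDC5Aux

/-- In the presence of the axioms [C∂.0]–[C∂.5], the pair of axioms
[C∂.6] and [C∂.7] is equivalent to the pair [C∂.6.a] and [C∂.7.a]. -/
theorem cd67_iff_cd67a (X : CDC5) :
    ((∀ (C A B : X.Obj) (f : X.Hom A B) (x y z : X.Hom C A),
        X.comp (X.d (X.d f)) (X.pair (X.pair x y) (X.pair X.zero z))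
          = X.comp (X.d f) (X.pair (X.add x (X.eps y)) z) ) ∧
     (∀ (C A B : X.Obj) (f : X.Hom A B) (x y z : X.Hom C A),
        X.comp (X.d (X.d f)) (X.pair (X.pair x y) (X.pair z X.zero))
          = X.comp (X.d (X.d f)) (X.pair (X.pair x z) (X.pair y X.zero)) ))
    ↔
    ((∀ (C A B : X.Obj) (f : X.Hom A B) (x y : X.Hom C A),
        X.comp (X.d (X.d f)) (X.pair (X.pair x X.zero) (X.pair X.zero y))
          = X.comp (X.d f) (X.pair x y) ) ∧
     (∀ (C A B : X.Obj) (f : X.Hom A B) (x y z w : X.Hom C A),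
        X.comp (X.d (X.d f)) (X.pair (X.pair x y) (X.pair z w))
          = X.comp (X.d (X.d f)) (X.pair (X.pair x z) (X.pair y w)) )) := by
  constructor
  · rintro ⟨h6, h7⟩
    constructor
    · intro C A B f x y
      have h := h6 C A B f x X.zero y
      rwa [X.eps_zero, X.add_zero] at h
    · intro C A B f x y z w
      have hsplit : ∀ (u v : X.Hom C A), X.pair u v
          = X.add (X.pair u X.zero) (X.pair X.zero v) := by
        intro u v
        rw [← pair_add, X.add_zero, zero_add]
      have key : ∀ (a b c e : X.Hom C A),
          X.comp (X.d (X.d f)) (X.pair (X.pair a b) (X.pair c e))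
            = X.add (X.comp (X.d (X.d f)) (X.pair (X.pair a b) (X.pair c X.zero)))
                (X.comp (X.d f) (X.pair (X.add (X.add a (X.eps c)) (X.eps b)) e)) := by
        intro a b c e
        rw [hsplit c e, X.cd2, eps_pair, X.eps_zero, ← pair_add, X.add_zero,
          h6 C A B f (X.add a (X.eps c)) b e]
      rw [key x y z w, key x z y w, h7 C A B f x y z]
      have hx : X.add (X.add x (X.eps z)) (X.eps y)
          = X.add (X.add x (X.eps y)) (X.eps z) := by
        rw [X.add_assoc, X.add_assoc, X.add_comm (X.eps z) (X.eps y)]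
      rw [hx]
  · rintro ⟨h6a, h7a⟩
    constructor
    · intro C A B f x y z
      rw [h7a C A B f x y X.zero z]
      have hsplit : X.pair y z = X.add (X.pair y X.zero) (X.pair X.zero z) := by
        rw [← pair_add, X.add_zero, zero_add]
      rw [hsplit, X.cd2, eps_pair, X.eps_zero, ← pair_add, X.add_zero,
        h7a C A B f x X.zero y X.zero, pair_zero, X.cd2_zero, zero_add,
        h6a C A B f (X.add x (X.eps y)) z]
    · intro C A B f x y z
      exact h7a C A B f x y z X.zero
end

section
/- In a Cartesian difference category in which the infinitesimal extension ε is nilpotent (for every map f there is k with ε^k(f) = 0) and satisfying ε(∂[∂[f]])∘⟨⟨x,y⟩,⟨z,0⟩⟩ = ε²(∂[∂[f]])∘⟨⟨x,y⟩,⟨z,0⟩⟩ for all f, x, y, z, every derivative is additive in its second argument: ∂[f]∘⟨x, y+z⟩ = ∂[f]∘⟨x,y⟩ + ∂[f]∘⟨x,z⟩. -/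
universe u v

lemma CDC.p0_eps (X : CDC) {C A B : X.Obj} (h : X.Hom C (X.prod A B)) :
    X.comp X.p0 (X.eps h) = X.eps (X.comp X.p0 h) := by
  have h1 : X.eps h = X.comp (X.eps (X.id _)) h := by
    rw [← X.eps_comp, X.id_comp]
  rw [h1, ← X.comp_assoc, ← X.eps_p0, X.eps_comp]

lemma CDC.p1_eps (X : CDC) {C A B : X.Obj} (h : X.Hom C (X.prod A B)) :
    X.comp X.p1 (X.eps h) = X.eps (X.comp X.p1 h) := by
  have h1 : X.eps h = X.comp (X.eps (X.id _)) h := by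
    rw [← X.eps_comp, X.id_comp]
  rw [h1, ← X.comp_assoc, ← X.eps_p1, X.eps_comp]

lemma CDC.eps_pair (X : CDC) {C A B : X.Obj} (a : X.Hom C A) (b : X.Hom C B) :
    X.eps (X.pair a b) = X.pair (X.eps a) (X.eps b) := by
  have := X.pair_unique (X.eps (X.pair a b))
  rw [X.p0_eps, X.p1_eps, X.pair_p0, X.pair_p1] at this
  exact this.symm

lemma CDC.pair_add (X : CDC) {C A B : X.Obj} (a c : X.Hom C A) (b d : X.Hom C B) :
    X.add (X.pair a b) (X.pair c d) = X.pair (X.add a c) (X.add b d) := by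
  have := X.pair_unique (X.add (X.pair a b) (X.pair c d))
  rw [X.p0_add, X.p1_add, X.pair_p0, X.pair_p0, X.pair_p1, X.pair_p1] at this
  exact this.symm

lemma CDC.dd_eps_iter (X : CDC) {A B : X.Obj} (f : X.Hom A B) (m : ℕ) :
    X.d (X.d ((fun g : X.Hom A B => X.eps g)^[m] f))
      = (fun g : X.Hom (X.prod (X.prod A A) (X.prod A A)) B => X.eps g)^[m]
          (X.d (X.d f)) := by
  induction m with
  | zero => rfl
  | succ n ih =>
    rw [Function.iterate_succ_apply', Function.iterate_succ_apply',
      X.cd1_eps, X.cd1_eps, ih]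

lemma CDC.eps_dd_chain (X : CDC)
    (h5 : ∀ (C A B : X.Obj) (f : X.Hom A B) (x y z : X.Hom C A),
      X.comp (X.eps (X.d (X.d f))) (X.pair (X.pair x y) (X.pair z X.zero))
        = X.comp (X.eps (X.eps (X.d (X.d f)))) (X.pair (X.pair x y) (X.pair z X.zero)))
    {C A B : X.Obj} (f : X.Hom A B) (x y z : X.Hom C A) (m : ℕ) :
    X.comp (X.eps (X.d (X.d f))) (X.pair (X.pair x y) (X.pair z X.zero))
      = X.comp ((fun g : X.Hom (X.prod (X.prod A A) (X.prod A A)) B => X.eps g)^[m + 1]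
          (X.d (X.d f))) (X.pair (X.pair x y) (X.pair z X.zero)) := by
  induction m with
  | zero => rfl
  | succ n ih =>
    rw [ih]
    have h1 : (fun g : X.Hom (X.prod (X.prod A A) (X.prod A A)) B => X.eps g)^[n + 1]
        (X.d (X.d f)) = X.eps (X.d (X.d ((fun g : X.Hom A B => X.eps g)^[n] f))) := by
      rw [Function.iterate_succ_apply', X.dd_eps_iter]
    rw [h1, h5, X.dd_eps_iter, Function.iterate_succ_apply',
      Function.iterate_succ_apply']

/-- In a Cartesian difference category with nilpotent infinitesimal extension,
satisfying identity (5) (`ε(∂[∂[f]])∘⟨⟨x,y⟩,⟨z,0⟩⟩ = ε²(∂[∂[f]])∘⟨⟨x,y⟩,⟨z,0⟩⟩`),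
every derivative is additive in its second argument. -/
theorem d_additive_in_second_arg_of_nilpotent (X : CDC)
    (hnil : ∀ (A B : X.Obj) (f : X.Hom A B),
      ∃ k : ℕ, (fun g : X.Hom A B => X.eps g)^[k] f = X.zero)
    (h5 : ∀ (C A B : X.Obj) (f : X.Hom A B) (x y z : X.Hom C A),
      X.comp (X.eps (X.d (X.d f))) (X.pair (X.pair x y) (X.pair z X.zero))
        = X.comp (X.eps (X.eps (X.d (X.d f)))) (X.pair (X.pair x y) (X.pair z X.zero)))
    {C A B : X.Obj} (f : X.Hom A B) (x y z : X.Hom C A) :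
    X.comp (X.d f) (X.pair x (X.add y z))
      = X.add (X.comp (X.d f) (X.pair x y)) (X.comp (X.d f) (X.pair x z)) := by
  rw [X.cd2]
  congr 1
  have hw : X.pair (X.add x (X.eps y)) z
      = X.add (X.pair x z) (X.eps (X.pair y X.zero)) := by
    rw [X.eps_pair, X.eps_zero, X.pair_add, X.add_zero]
  rw [hw, X.cd0]
  have hz : X.eps (X.comp (X.d (X.d f)) (X.pair (X.pair x z) (X.pair y X.zero)))
      = X.zero := by
    rw [X.eps_comp]
    obtain ⟨k, hk⟩ := hnil _ _ (X.d (X.d f))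
    rw [X.eps_dd_chain h5 f x z y k, Function.iterate_succ_apply', hk,
      X.eps_zero, X.zero_comp]
  rw [hz, X.add_zero]
end

section
/- In a Cartesian left additive category, infinitesimal extensions ε are in bijective correspondence with families of additive maps ε_A : A → A indexed by objects satisfying ε_{A×B} = ε_A × ε_B; the correspondence is given by ε(f) = ε_B ∘ f and ε_A = ε(1_A). -/
universe u v

/-- A Cartesian left additive category: a category with chosen binary products
whose hom-sets are commutative monoids, where precomposition preserves the
additive structure and the projections are additive. -/
structure CLAC where
  Obj : Type u
  Hom : Obj → Obj → Type v
  id : ∀ (A : Obj), Hom A A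
  comp : ∀ {A B C : Obj}, Hom B C → Hom A B → Hom A C
  comp_id : ∀ {A B : Obj} (f : Hom A B), comp f (id A) = f
  id_comp : ∀ {A B : Obj} (f : Hom A B), comp (id B) f = f
  comp_assoc : ∀ {A B C D : Obj} (h : Hom C D) (g : Hom B C) (f : Hom A B),
      comp (comp h g) f = comp h (comp g f)
  prod : Obj → Obj → Obj
  p0 : ∀ {A B : Obj}, Hom (prod A B) A
  p1 : ∀ {A B : Obj}, Hom (prod A B) B
  pair : ∀ {C A B : Obj}, Hom C A → Hom C B → Hom C (prod A B)
  pair_p0 : ∀ {C A B : Obj} (f : Hom C A) (g : Hom C B), comp p0 (pair f g) = f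
  pair_p1 : ∀ {C A B : Obj} (f : Hom C A) (g : Hom C B), comp p1 (pair f g) = g
  pair_unique : ∀ {C A B : Obj} (h : Hom C (prod A B)),
      pair (comp p0 h) (comp p1 h) = h
  add : ∀ {A B : Obj}, Hom A B → Hom A B → Hom A B
  zero : ∀ {A B : Obj}, Hom A B
  add_assoc : ∀ {A B : Obj} (f g h : Hom A B), add (add f g) h = add f (add g h)
  add_comm : ∀ {A B : Obj} (f g : Hom A B), add f g = add g f
  add_zero : ∀ {A B : Obj} (f : Hom A B), add f zero = f
  add_comp : ∀ {A B C : Obj} (f g : Hom B C) (h : Hom A B),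
      comp (add f g) h = add (comp f h) (comp g h)
  zero_comp : ∀ {A B C : Obj} (h : Hom A B), comp (zero : Hom B C) h = (zero : Hom A C)
  p0_add : ∀ {A B C : Obj} (f g : Hom C (prod A B)),
      comp p0 (add f g) = add (comp p0 f) (comp p0 g)
  p0_zero : ∀ {A B C : Obj},
      comp (p0 : Hom (prod A B) A) (zero : Hom C (prod A B)) = zero
  p1_add : ∀ {A B C : Obj} (f g : Hom C (prod A B)),
      comp p1 (add f g) = add (comp p1 f) (comp p1 g)
  p1_zero : ∀ {A B C : Obj},
      comp (p1 : Hom (prod A B) B) (zero : Hom C (prod A B)) = zero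

/-- `e` is an infinitesimal extension on the Cartesian left additive category `X`:
it is a monoid morphism on hom-sets [E.1], satisfies `ε(g ∘ f) = ε(g) ∘ f` [E.2],
and is compatible with projections [E.3]. -/
def IsInfExt (X : CLAC) (e : ∀ (A B : X.Obj), X.Hom A B → X.Hom A B) : Prop :=
  (∀ (A B : X.Obj) (f g : X.Hom A B), e A B (X.add f g) = X.add (e A B f) (e A B g)) ∧
  (∀ (A B : X.Obj), e A B (X.zero) = X.zero) ∧
  (∀ (A B C : X.Obj) (g : X.Hom B C) (f : X.Hom A B),
      e A C (X.comp g f) = X.comp (e B C g) f) ∧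
  (∀ (A B : X.Obj),
      e (X.prod A B) A X.p0 = X.comp X.p0 (e _ _ (X.id (X.prod A B)))) ∧
  (∀ (A B : X.Obj),
      e (X.prod A B) B X.p1 = X.comp X.p1 (e _ _ (X.id (X.prod A B))))

/-- A family of maps `v A : A → A` such that each `v A` is additive and
`v (A × B) = v A × v B`. -/
def IsGoodFamily (X : CLAC) (v : ∀ A : X.Obj, X.Hom A A) : Prop :=
  (∀ (A C : X.Obj) (f g : X.Hom C A),
      X.comp (v A) (X.add f g) = X.add (X.comp (v A) f) (X.comp (v A) g)) ∧
  (∀ (A C : X.Obj), X.comp (v A) (X.zero : X.Hom C A) = X.zero) ∧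
  (∀ (A B : X.Obj),
      v (X.prod A B) = X.pair (X.comp (v A) X.p0) (X.comp (v B) X.p1))

/-- Infinitesimal extensions are in bijective correspondence with families of
additive maps `ε_A : A → A` satisfying `ε_{A×B} = ε_A × ε_B`; the correspondence
sends `ε` to the family `ε_A = ε(1_A)` and a family `(ε_A)` to `ε(f) = ε_B ∘ f`,
and these two constructions are mutually inverse. -/
theorem inf_ext_equiv_additive_family (X : CLAC) :
    (∀ e : ∀ (A B : X.Obj), X.Hom A B → X.Hom A B, IsInfExt X e →
        IsGoodFamily X (fun A => e A A (X.id A)) ∧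
        ∀ (A B : X.Obj) (f : X.Hom A B), e A B f = X.comp (e B B (X.id B)) f) ∧
    (∀ v : ∀ A : X.Obj, X.Hom A A, IsGoodFamily X v →
        IsInfExt X (fun _ B f => X.comp (v B) f) ∧
        ∀ A : X.Obj, X.comp (v A) (X.id A) = v A) := by
  constructor
  · rintro e ⟨hadd, hzero, hcomp, hp0, hp1⟩
    have key : ∀ (A B : X.Obj) (f : X.Hom A B), e A B f = X.comp (e B B (X.id B)) f := by
      intro A B f
      have := hcomp A B B (X.id B) f
      rw [X.id_comp] at this
      exact this
    refine ⟨⟨?_, ?_, ?_⟩, key⟩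
    · intro A C f g
      rw [← key, ← key, ← key, hadd]
    · intro A C
      rw [← key, hzero]
    · intro A B
      dsimp only
      have h := X.pair_unique (e (X.prod A B) (X.prod A B) (X.id (X.prod A B)))
      rw [← h, ← hp0, ← hp1, key _ _ (X.p0 : X.Hom (X.prod A B) A),
        key _ _ (X.p1 : X.Hom (X.prod A B) B)]
  · rintro v ⟨hadd, hzero, hprod⟩
    refine ⟨⟨?_, ?_, ?_, ?_, ?_⟩, fun A => X.comp_id _⟩
    · intro A B f g; exact hadd B A f g
    · intro A B; exact hzero B A
    · intro A B C g f; dsimp only; exact (X.comp_assoc _ _ _).symm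
    · intro A B
      dsimp only; rw [X.comp_id, hprod, X.pair_p0]
    · intro A B
      dsimp only; rw [X.comp_id, hprod, X.pair_p1]
end

section
/- Let X be a Cartesian left additive category with infinitesimal extension ε. For every object A, setting ⊕_A = π₀ + ε(π₁) : A×A → A, +_A = π₀ + π₁, and 0_A = 0 : ⊤ → A yields a change action structure: (A, +_A, 0_A) is a monoid and ⊕_A is an action of it on A, i.e., x ⊕ 0 = x and x ⊕ (y + z) = (x ⊕ y) ⊕ z. -/
universe u v

/-- A Cartesian left additive category: a category with chosen binary products
whose hom-sets are commutative monoids, where precomposition preserves the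
additive structure and the projections are additive, equipped with an infinitesimal extension ε. -/
structure CLACE where
  Obj : Type u
  Hom : Obj → Obj → Type v
  id : ∀ (A : Obj), Hom A A
  comp : ∀ {A B C : Obj}, Hom B C → Hom A B → Hom A C
  comp_id : ∀ {A B : Obj} (f : Hom A B), comp f (id A) = f
  id_comp : ∀ {A B : Obj} (f : Hom A B), comp (id B) f = f
  comp_assoc : ∀ {A B C D : Obj} (h : Hom C D) (g : Hom B C) (f : Hom A B),
      comp (comp h g) f = comp h (comp g f)
  prod : Obj → Obj → Obj
  p0 : ∀ {A B : Obj}, Hom (prod A B) A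
  p1 : ∀ {A B : Obj}, Hom (prod A B) B
  pair : ∀ {C A B : Obj}, Hom C A → Hom C B → Hom C (prod A B)
  pair_p0 : ∀ {C A B : Obj} (f : Hom C A) (g : Hom C B), comp p0 (pair f g) = f
  pair_p1 : ∀ {C A B : Obj} (f : Hom C A) (g : Hom C B), comp p1 (pair f g) = g
  pair_unique : ∀ {C A B : Obj} (h : Hom C (prod A B)),
      pair (comp p0 h) (comp p1 h) = h
  add : ∀ {A B : Obj}, Hom A B → Hom A B → Hom A B
  zero : ∀ {A B : Obj}, Hom A B
  add_assoc : ∀ {A B : Obj} (f g h : Hom A B), add (add f g) h = add f (add g h)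
  add_comm : ∀ {A B : Obj} (f g : Hom A B), add f g = add g f
  add_zero : ∀ {A B : Obj} (f : Hom A B), add f zero = f
  add_comp : ∀ {A B C : Obj} (f g : Hom B C) (h : Hom A B),
      comp (add f g) h = add (comp f h) (comp g h)
  zero_comp : ∀ {A B C : Obj} (h : Hom A B), comp (zero : Hom B C) h = (zero : Hom A C)
  p0_add : ∀ {A B C : Obj} (f g : Hom C (prod A B)),
      comp p0 (add f g) = add (comp p0 f) (comp p0 g)
  p0_zero : ∀ {A B C : Obj},
      comp (p0 : Hom (prod A B) A) (zero : Hom C (prod A B)) = zero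
  p1_add : ∀ {A B C : Obj} (f g : Hom C (prod A B)),
      comp p1 (add f g) = add (comp p1 f) (comp p1 g)
  p1_zero : ∀ {A B C : Obj},
      comp (p1 : Hom (prod A B) B) (zero : Hom C (prod A B)) = zero
  eps : ∀ {A B : Obj}, Hom A B → Hom A B
  eps_add : ∀ {A B : Obj} (f g : Hom A B), eps (add f g) = add (eps f) (eps g)
  eps_zero : ∀ {A B : Obj}, eps (zero : Hom A B) = zero
  eps_comp : ∀ {A B C : Obj} (g : Hom B C) (f : Hom A B),
      eps (comp g f) = comp (eps g) f
  eps_p0 : ∀ {A B : Obj},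
      eps (p0 : Hom (prod A B) A) = comp p0 (eps (id (prod A B)))
  eps_p1 : ∀ {A B : Obj},
      eps (p1 : Hom (prod A B) B) = comp p1 (eps (id (prod A B)))

/-- In a Cartesian left additive category with infinitesimal extension `ε`,
setting `⊕_A = π₀ + ε(π₁)`, `+_A = π₀ + π₁` and `0_A = 0` makes every object `A`
a change action: `(A, +_A, 0_A)` is a (commutative) monoid, and `⊕_A` is an
action of it on `A`: `x ⊕ 0 = x` and `x ⊕ (y + z) = (x ⊕ y) ⊕ z`. -/
theorem eps_change_action (X : CLACE) (A : X.Obj) :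
    -- monoid laws for +_A and 0_A on generalized elements
    (∀ (C : X.Obj) (x : X.Hom C A), X.add x X.zero = x) ∧
    (∀ (C : X.Obj) (x : X.Hom C A), X.add X.zero x = x) ∧
    (∀ (C : X.Obj) (x y z : X.Hom C A),
        X.add (X.add x y) z = X.add x (X.add y z)) ∧
    -- ⊕_A = π₀ + ε(π₁) is an action: unit law
    (∀ (C : X.Obj) (x : X.Hom C A),
        X.comp (X.add X.p0 (X.eps X.p1)) (X.pair x X.zero) = x) ∧
    -- action associativity law
    (∀ (C : X.Obj) (x y z : X.Hom C A),
        X.comp (X.add X.p0 (X.eps X.p1)) (X.pair x (X.add y z))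
          = X.comp (X.add X.p0 (X.eps X.p1))
              (X.pair (X.comp (X.add X.p0 (X.eps X.p1)) (X.pair x y)) z)) := by
  have key : ∀ (C : X.Obj) (x d : X.Hom C A),
      X.comp (X.add X.p0 (X.eps X.p1)) (X.pair x d) = X.add x (X.eps d) := by
    intro C x d
    rw [X.add_comp, X.pair_p0, ← X.eps_comp, X.pair_p1]
  refine ⟨fun C x => X.add_zero x, fun C x => ?_, fun C x y z => X.add_assoc x y z,
    fun C x => ?_, fun C x y z => ?_⟩
  · rw [X.add_comm, X.add_zero]
  · rw [key, X.eps_zero, X.add_zero]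
  · rw [key, key, key, X.eps_add, X.add_assoc]
end

section
/- For causal functions on streams over abelian groups, the truncation operator z, defined by (z[a])₀ = 0 and (z[a])_{n+1} = a_{n+1}, together with the difference operator ∂[f]([a],[b])₀ = f([a]+[b])₀ − f([a])₀ and ∂[f]([a],[b])_{n+1} = f([a]+z[b])_{n+1} − f([a])_{n+1}, satisfies the Kock–Lawvere style axiom: f([a] + z[b]) = f([a]) + z(∂[f]([a],[b])). -/
/-- The truncation operator `z` on streams: head is set to `0`, tail kept. -/
def trunc {A : Type*} [AddCommGroup A] (a : ℕ → A) : ℕ → A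
  | 0 => 0
  | n + 1 => a (n + 1)

/-- The stream difference operator:
`∂[f]([a],[b])₀ = f([a]+[b])₀ − f([a])₀` and
`∂[f]([a],[b])_{n+1} = f([a]+z[b])_{n+1} − f([a])_{n+1}`. -/
def sd {G H : Type*} [AddCommGroup G] [AddCommGroup H]
    (f : (ℕ → G) → (ℕ → H)) (a b : ℕ → G) : ℕ → H
  | 0 => f (a + b) 0 - f a 0
  | n + 1 => f (a + trunc b) (n + 1) - f a (n + 1)

/-- A stream function is causal if the first `n+1` elements of the output
depend only on the first `n+1` elements of the input. -/
def Causal {G H : Type*} (f : (ℕ → G) → (ℕ → H)) : Prop :=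
  ∀ (a b : ℕ → G) (n : ℕ), (∀ i ≤ n, a i = b i) → ∀ i ≤ n, f a i = f b i

/-- Kock–Lawvere style axiom for causal stream functions:
`f([a] + z[b]) = f([a]) + z(∂[f]([a],[b]))`. -/
theorem stream_kock_lawvere {G H : Type*} [AddCommGroup G] [AddCommGroup H]
    (f : (ℕ → G) → (ℕ → H)) (hf : Causal f) (a b : ℕ → G) :
    f (a + trunc b) = f a + trunc (sd f a b) := by
  funext n
  cases n with
  | zero =>
    have h0 : f (a + trunc b) 0 = f a 0 := by
      apply hf (a + trunc b) a 0
      · intro i hi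
        interval_cases i
        simp [trunc]
      · exact le_refl 0
    simp [h0, trunc, Pi.add_apply]
  | succ n =>
    simp [trunc, sd, Pi.add_apply]
end

section
/- Any causal stream function f : G^ω → H^ω that is linear for the stream difference operator (∂[f]([a],[b]) = f([b])) is a group homomorphism for the pointwise group structures, and moreover satisfies: whenever two streams agree from index 1 onwards ([a]_{1:ω} = [b]_{1:ω}), the outputs agree from index 1 onwards (f([a])_{n+1} = f([b])_{n+1}). -/
/-- Any linear causal stream function is a group homomorphism, and is
insensitive, from index 1 onwards, to the head of its input. -/
theorem stream_linear_is_hom {G H : Type*} [AddCommGroup G] [AddCommGroup H]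
    (f : (ℕ → G) → (ℕ → H)) (hf : Causal f)
    (hlin : ∀ a b : ℕ → G, sd f a b = f b) :
    (∀ a b : ℕ → G, f (a + b) = f a + f b) ∧ f 0 = 0 ∧
    (∀ a b : ℕ → G, (∀ n : ℕ, a (n + 1) = b (n + 1)) →
      ∀ n : ℕ, f a (n + 1) = f b (n + 1)) := by
  have tail : ∀ a b : ℕ → G, (∀ n : ℕ, a (n + 1) = b (n + 1)) →
      ∀ n : ℕ, f a (n + 1) = f b (n + 1) := by
    intro a b hab n
    have htr : trunc a = trunc b := by
      funext i; cases i with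
      | zero => rfl
      | succ k => exact hab k
    have h1 := congrFun (hlin 0 a) (n + 1)
    have h2 := congrFun (hlin 0 b) (n + 1)
    simp only [sd] at h1 h2
    rw [htr] at h1
    rw [← h1, ← h2]
  have htr0 : trunc (0 : ℕ → G) = 0 := by
    funext i; cases i with
    | zero => rfl
    | succ k => rfl
  have hzero : f 0 = 0 := by
    funext i
    have h := congrFun (hlin 0 0) i
    cases i with
    | zero =>
        simp only [sd, add_zero, sub_self] at h
        simpa using h.symm
    | succ k =>
        simp only [sd, htr0, add_zero, sub_self] at h
        simpa using h.symm
  have hom : ∀ a b : ℕ → G, f (a + b) = f a + f b := by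
    intro a b
    funext i
    have h := congrFun (hlin a b) i
    cases i with
    | zero =>
        simp only [sd] at h
        simp only [Pi.add_apply]
        rw [sub_eq_iff_eq_add] at h
        rw [h, add_comm]
    | succ k =>
        have heq : f (a + b) (k + 1) = f (a + trunc b) (k + 1) := by
          apply tail
          intro n
          simp [trunc, Pi.add_apply]
        simp only [sd] at h
        simp only [Pi.add_apply]
        rw [heq]
        rw [sub_eq_iff_eq_add] at h
        rw [h, add_comm]
  exact ⟨hom, hzero, tail⟩
end
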